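/- Let S : A → A be the K-linear endomorphism determined on the basis ω₁, ω₂, ω₃, ω₄, η₁, η₂, η₃, η₄ by S(ωᵢ) = ωᵢ for i = 1,2,3,4 and S(η₁) = (1/2)(η₁ + ζ⁻¹η₂ + η₃ − ζ⁻¹η₄), S(η₂) = (1/2)(ζ⁻¹η₁ + η₂ − ζ⁻¹η₃ + η₄), S(η₃) = (1/2)(η₁ − ζ⁻¹η₂ + η₃ + ζ⁻¹η₄), S(η₄) = (1/2)(−ζ⁻¹η₁ + η₂ + ζ⁻¹η₃ + η₄). Then S is an antipode for (A, Δ, ε): writing Δ(a) = ∑ a₁ ⊗ a₂, one has ∑ S(a₁)a₂ = ε(a)1 = ∑ a₁S(a₂) for all a ∈ A. -/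

import Mathlib

open MvPolynomial TensorProduct

/-- The defining ideal of the first example: generated by `x⁴ - 1` and
`y² - (1/2)(1 + ζx + x² - ζx³)`. -/
noncomputable def firstRelIdeal (K : Type*) [Field K] (ζ : K) :
    Ideal (MvPolynomial (Fin 2) K) :=
  Ideal.span {X 0 ^ 4 - 1,
    X 1 ^ 2 - C ((2 : K)⁻¹) * (1 + C ζ * X 0 + X 0 ^ 2 - C ζ * X 0 ^ 3)}

/-- The first example: the commutative `K`-algebra generated by commuting elements `x`, `y`
subject to `x⁴ = 1` and `y² = (1/2)(1 + ζx + x² - ζx³)`. -/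
abbrev FirstAlg (K : Type*) [Field K] (ζ : K) : Type _ :=
  MvPolynomial (Fin 2) K ⧸ firstRelIdeal K ζ

/-- The generator `x` of the first example. -/
noncomputable def xF (K : Type*) [Field K] (ζ : K) : FirstAlg K ζ :=
  Ideal.Quotient.mk (firstRelIdeal K ζ) (X 0)

/-- The generator `y` of the first example. -/
noncomputable def yF (K : Type*) [Field K] (ζ : K) : FirstAlg K ζ :=
  Ideal.Quotient.mk (firstRelIdeal K ζ) (X 1)

/-- The group `G = ℤ/2 × ℤ/2`, written multiplicatively. -/
abbrev GG : Type := Multiplicative (ZMod 2 × ZMod 2)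

/-- `g₁ = (0,0)`. -/
def g1 : GG := Multiplicative.ofAdd (0, 0)
/-- `g₂ = (1,0)`. -/
def g2 : GG := Multiplicative.ofAdd (1, 0)
/-- `g₃ = (0,1)`. -/
def g3 : GG := Multiplicative.ofAdd (0, 1)
/-- `g₄ = (1,1)`. -/
def g4 : GG := Multiplicative.ofAdd (1, 1)

/-- The twisted multiplication of `A ⊗̂ A`:
`(a ⊗ b)(a' ⊗ b') = (1/4) ∑_{g,g'} θ(g,g') (a (g.a')) ⊗ ((g'.b) b')`,
extended bilinearly. -/
noncomputable def twMul {K : Type*} [Field K] {B : Type*} [Ring B] [Algebra K B]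
    {G : Type*} [Monoid G] [Fintype G]
    (ρ : G →* (B →ₐ[K] B)) (θ : G → G → K)
    (z w : B ⊗[K] B) : B ⊗[K] B :=
  (4 : K)⁻¹ • ∑ g : G, ∑ g' : G, θ g g' •
    (TensorProduct.map (LinearMap.mul' K B) (LinearMap.mul' K B))
      ((TensorProduct.tensorTensorTensorComm K B B B B)
        ((TensorProduct.map
            (TensorProduct.map LinearMap.id (ρ g').toLinearMap)
            (TensorProduct.map (ρ g).toLinearMap LinearMap.id))
          (z ⊗ₜ[K] w)))

/-- `ω₁ := 1`. -/
noncomputable def w1F (K : Type*) [Field K] (ζ : K) : FirstAlg K ζ := 1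

/-- `ω₂ := (1/2)(1 + ιζ²)x + (1/2)(1 - ιζ²)x³`, where `ι = ξ²`. -/
noncomputable def w2F (K : Type*) [Field K] (ξ ζ : K) : FirstAlg K ζ :=
  ((2 : K)⁻¹ * (1 + ξ ^ 2 * ζ ^ 2)) • xF K ζ +
    ((2 : K)⁻¹ * (1 - ξ ^ 2 * ζ ^ 2)) • (xF K ζ ^ 3)

/-- `ω₃ := (1/2)(1 - ιζ²)x + (1/2)(1 + ιζ²)x³`, where `ι = ξ²`. -/
noncomputable def w3F (K : Type*) [Field K] (ξ ζ : K) : FirstAlg K ζ :=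
  ((2 : K)⁻¹ * (1 - ξ ^ 2 * ζ ^ 2)) • xF K ζ +
    ((2 : K)⁻¹ * (1 + ξ ^ 2 * ζ ^ 2)) • (xF K ζ ^ 3)

/-- `ω₄ := x²`. -/
noncomputable def w4F (K : Type*) [Field K] (ζ : K) : FirstAlg K ζ := xF K ζ ^ 2

/-- `η₁ := y`. -/
noncomputable def e1F (K : Type*) [Field K] (ζ : K) : FirstAlg K ζ := yF K ζ

/-- `η₂ := x³y`. -/
noncomputable def e2F (K : Type*) [Field K] (ζ : K) : FirstAlg K ζ := xF K ζ ^ 3 * yF K ζ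

/-- `η₃ := x²y`. -/
noncomputable def e3F (K : Type*) [Field K] (ζ : K) : FirstAlg K ζ := xF K ζ ^ 2 * yF K ζ

/-- `η₄ := xy`. -/
noncomputable def e4F (K : Type*) [Field K] (ζ : K) : FirstAlg K ζ := xF K ζ * yF K ζ


/-!
The antipode identities are linear in `a`, and `A` is spanned by `xⁱyʲ` (`i < 4`, `j < 2`), so it
suffices to check them on these eight elements. Put `x₊ = (x + x³)/2` and `x₋ = (x - x³)/2`; then
`Δx = x ⊗ x₊ + x³ ⊗ x₋`, where `x₊` is `G`-invariant and `G` acts on `x₋` through the character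
`θ(g₃, ·)`. By orthogonality of `θ`, the twisted product `(a ⊗ b)(c ⊗ d)` with such an eigenvector
`b` collapses to the single term `(a · h.c) ⊗ bd`, so the coproduct of the basis is computed in the
ordinary tensor product: `x², y, xy, x²y, x³y` are group-like and `Δx³ = x³ ⊗ x₊ - x ⊗ x₋`. Since
`ω₂, ω₃ = x₊ ± ιζ² x₋`, the map `S` fixes `x₊, x₋, x, x³`, which settles `x` and `x³`; for a
group-like `g` the identities reduce to `S(g) g = 1`, a computation modulo the relations.
-/

theorem two_ne_zero_of_isPrimitiveRoot {K : Type*} [Field K] {ξ : K} {n : ℕ} [NeZero n]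
    (hξ : IsPrimitiveRoot ξ n) (hn : 2 ∣ n) : (2 : K) ≠ 0 := by
  obtain ⟨m, rfl⟩ := hn
  intro h
  exact hξ.neZero'.out (by rw [Nat.cast_mul, Nat.cast_two, h, zero_mul])

theorem GG_cases (g : GG) : g = g1 ∨ g = g2 ∨ g = g3 ∨ g = g4 := by
  revert g; decide

theorem sum_GG {M : Type*} [AddCommMonoid M] (f : GG → M) :
    ∑ g, f g = f g1 + f g2 + f g3 + f g4 := by
  rw [show (Finset.univ : Finset GG) = {g1, g2, g3, g4} by decide, Finset.sum_insert (by decide),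
    Finset.sum_insert (by decide), Finset.sum_insert (by decide), Finset.sum_singleton]
  abel

section Bicharacter

variable {K : Type*} [CommRing K] {θ : GG → GG → K}

theorem theta_one_right (hθr : ∀ g h h' : GG, θ g (h * h') = θ g h * θ g h')
    (hθl : ∀ g g' h : GG, θ (g * g') h = θ g h * θ g' h)
    (hθ23 : θ g2 g3 = -1) (hθ33 : θ g3 g3 = 1) (g : GG) : θ g 1 = 1 := by
  rw [show (1 : GG) = g3 * g3 by decide, hθr]
  rcases GG_cases g with rfl | rfl | rfl | rfl
  · rw [show g1 = g3 * g3 by decide, hθl, hθ33]; ring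
  · rw [hθ23]; ring
  · rw [hθ33]; ring
  · rw [show g4 = g2 * g3 by decide, hθl, hθ23, hθ33]; ring

theorem theta_one_left (hθr : ∀ g h h' : GG, θ g (h * h') = θ g h * θ g h')
    (hθl : ∀ g g' h : GG, θ (g * g') h = θ g h * θ g' h)
    (hθ32 : θ g3 g2 = -1) (hθ33 : θ g3 g3 = 1) (g : GG) : θ 1 g = 1 := by
  rw [show (1 : GG) = g3 * g3 by decide, hθl]
  rcases GG_cases g with rfl | rfl | rfl | rfl
  · rw [show g1 = g3 * g3 by decide, hθr, hθ33]; ring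
  · rw [hθ32]; ring
  · rw [hθ33]; ring
  · rw [show g4 = g2 * g3 by decide, hθr, hθ32, hθ33]; ring

theorem sum_theta (hθr : ∀ g h h' : GG, θ g (h * h') = θ g h * θ g h')
    (hθl : ∀ g g' h : GG, θ (g * g') h = θ g h * θ g' h)
    (hθ23 : θ g2 g3 = -1) (hθ32 : θ g3 g2 = -1) (hθ33 : θ g3 g3 = 1) (k : GG) :
    ∑ g, θ k g = if k = 1 then 4 else 0 := by
  have h1 := theta_one_right hθr hθl hθ23 hθ33
  have h4 : g4 = g2 * g3 := by decide
  rw [sum_GG, show g1 = 1 from rfl, h4]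
  rcases GG_cases k with rfl | rfl | rfl | rfl
  · simp only [theta_one_left hθr hθl hθ32 hθ33, show g1 = 1 from rfl]; norm_num
  · simp only [hθr, h1, hθ23, if_neg (by decide : g2 ≠ 1)]; ring
  · simp only [hθr, h1, hθ32, hθ33, if_neg (by decide : g3 ≠ 1)]; ring
  · simp only [h4, hθl, hθr, h1, hθ23, hθ32, hθ33, if_neg (by decide : g2 * g3 ≠ 1)]; ring

end Bicharacter

section TwistedProduct

variable {K : Type*} [Field K] {G : Type*} [Group G] [Fintype G] {θ : G → G → K}

theorem twMul_tmul {B : Type*} [Ring B] [Algebra K B] {ρ : G →* (B →ₐ[K] B)} (a b c d : B) :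
    twMul ρ θ (a ⊗ₜ b) (c ⊗ₜ d) =
      (4 : K)⁻¹ • ∑ g, ∑ g', θ g g' • (a * ρ g c) ⊗ₜ[K] (ρ g' b * d) := by
  simp [twMul]

theorem twMul_add_left {B : Type*} [Ring B] [Algebra K B] {ρ : G →* (B →ₐ[K] B)}
    (z z' w : B ⊗[K] B) : twMul ρ θ (z + z') w = twMul ρ θ z w + twMul ρ θ z' w := by
  simp only [twMul, add_tmul, map_add, smul_add, Finset.sum_add_distrib]

theorem twMul_tmul_of_eigen [DecidableEq G] {B : Type*} [Ring B] [Algebra K B]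
    {ρ : G →* (B →ₐ[K] B)} (hθl : ∀ g g' h : G, θ (g * g') h = θ g h * θ g' h)
    (horth : ∀ k : G, ∑ g, θ k g = if k = 1 then 4 else 0) (h4 : (4 : K) ≠ 0)
    {h : G} {b : B} (hb : ∀ g, ρ g b = θ h g • b) (a c d : B) :
    twMul ρ θ (a ⊗ₜ b) (c ⊗ₜ d) = (a * ρ h⁻¹ c) ⊗ₜ (b * d) := by
  have hsum (g : G) : ∑ g', θ g g' • (a * ρ g c) ⊗ₜ[K] (ρ g' b * d) =
      (if g = h⁻¹ then (4 : K) else 0) • (a * ρ g c) ⊗ₜ[K] (b * d) := by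
    simp_rw [hb, smul_mul_assoc, tmul_smul, smul_smul, ← hθl, ← Finset.sum_smul, horth,
      mul_eq_one_iff_eq_inv]
  simp_rw [twMul_tmul, hsum, ite_smul, zero_smul, Finset.sum_ite_eq', Finset.mem_univ, if_true,
    smul_smul, inv_mul_cancel₀ h4, one_smul]

theorem twMul_tmul_left_of_eigen [DecidableEq G] {B : Type*} [CommRing B] [Algebra K B]
    {ρ : G →* (B →ₐ[K] B)} (hθl : ∀ g g' h : G, θ (g * g') h = θ g h * θ g' h)
    (horth : ∀ k : G, ∑ g, θ k g = if k = 1 then 4 else 0) (h4 : (4 : K) ≠ 0)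
    {h : G} {b : B} (hb : ∀ g, ρ g b = θ h g • b) (a : B) (w : B ⊗[K] B) :
    twMul ρ θ (a ⊗ₜ b) w = (a ⊗ₜ b) * Algebra.TensorProduct.map (ρ h⁻¹) (AlgHom.id K B) w := by
  induction w using TensorProduct.induction_on with
  | zero => simp [twMul]
  | tmul c d =>
    rw [twMul_tmul_of_eigen hθl horth h4 hb, Algebra.TensorProduct.map_tmul,
      Algebra.TensorProduct.tmul_mul_tmul, AlgHom.id_apply]
  | add w w' hw hw' =>
    simp only [twMul, tmul_add, map_add, smul_add, Finset.sum_add_distrib] at hw hw' ⊢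
    rw [hw, hw', mul_add]

theorem twMul_tmul_left_of_invariant [DecidableEq G] {B : Type*} [CommRing B] [Algebra K B]
    {ρ : G →* (B →ₐ[K] B)} (hθl : ∀ g g' h : G, θ (g * g') h = θ g h * θ g' h)
    (horth : ∀ k : G, ∑ g, θ k g = if k = 1 then 4 else 0) (h4 : (4 : K) ≠ 0)
    (hθ1 : ∀ g, θ 1 g = 1) {b : B} (hb : ∀ g, ρ g b = b) (a : B) (w : B ⊗[K] B) :
    twMul ρ θ (a ⊗ₜ b) w = (a ⊗ₜ b) * w := by
  rw [twMul_tmul_left_of_eigen (h := 1) hθl horth h4 (fun g => by rw [hb, hθ1, one_smul]),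
    inv_one, map_one]
  change _ * Algebra.TensorProduct.map (AlgHom.id K B) (AlgHom.id K B) w = _
  rw [Algebra.TensorProduct.map_id, AlgHom.id_apply]

end TwistedProduct

section PlusMinus

variable (K : Type*) [Field K] {B : Type*} [CommRing B] [Algebra K B]

noncomputable def plusPart (x : B) : B := (2 : K)⁻¹ • (x + x ^ 3)

noncomputable def minusPart (x : B) : B := (2 : K)⁻¹ • (x - x ^ 3)

variable {K} {x : B}

theorem plusPart_add_minusPart (h2 : (2 : K) ≠ 0) : plusPart K x + minusPart K x = x := by
  rw [plusPart, minusPart, ← smul_add, show x + x ^ 3 + (x - x ^ 3) = (2 : K) • x by module,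
    smul_smul, inv_mul_cancel₀ h2, one_smul]

theorem plusPart_sub_minusPart (h2 : (2 : K) ≠ 0) : plusPart K x - minusPart K x = x ^ 3 := by
  rw [plusPart, minusPart, ← smul_sub, show x + x ^ 3 - (x - x ^ 3) = (2 : K) • x ^ 3 by module,
    smul_smul, inv_mul_cancel₀ h2, one_smul]

theorem sq_mul_plusPart (hx4 : x ^ 4 = 1) : x ^ 2 * plusPart K x = plusPart K x := by
  rw [plusPart, mul_smul_comm]
  congr 1
  linear_combination x * hx4

theorem sq_mul_minusPart (hx4 : x ^ 4 = 1) : x ^ 2 * minusPart K x = -minusPart K x := by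
  rw [minusPart, mul_smul_comm, ← smul_neg]
  congr 1
  linear_combination (-x) * hx4

theorem plusPart_mul_minusPart (hx4 : x ^ 4 = 1) : plusPart K x * minusPart K x = 0 := by
  rw [plusPart, minusPart, smul_mul_smul_comm,
    show (x + x ^ 3) * (x - x ^ 3) = 0 by linear_combination (-x ^ 2) * hx4, smul_zero]

theorem plusPart_sq_add_minusPart_sq (h2 : (2 : K) ≠ 0) (hx4 : x ^ 4 = 1) :
    plusPart K x ^ 2 + minusPart K x ^ 2 = x ^ 2 := by
  linear_combination (plusPart K x + minusPart K x + x) * plusPart_add_minusPart (x := x) h2 -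
    2 * plusPart_mul_minusPart (K := K) hx4

theorem mul_plusPart_add_mul_minusPart (h2 : (2 : K) ≠ 0) (hx4 : x ^ 4 = 1) :
    x * plusPart K x + x ^ 3 * minusPart K x = 1 := by
  linear_combination x * sq_mul_minusPart (K := K) hx4 + x * plusPart_sub_minusPart (x := x) h2 +
    hx4

theorem pow_three_mul_plusPart_sub_mul_minusPart (h2 : (2 : K) ≠ 0) (hx4 : x ^ 4 = 1) :
    x ^ 3 * plusPart K x + (-x) * minusPart K x = 1 := by
  linear_combination x * sq_mul_plusPart (K := K) hx4 + x * plusPart_sub_minusPart (x := x) h2 +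
    hx4

theorem plusPart_pow_three (hx4 : x ^ 4 = 1) : plusPart K (x ^ 3) = plusPart K x := by
  rw [plusPart, plusPart]
  congr 1
  linear_combination (x ^ 5 + x) * hx4

theorem minusPart_pow_three (hx4 : x ^ 4 = 1) : minusPart K (x ^ 3) = -minusPart K x := by
  rw [minusPart, minusPart, ← smul_neg]
  congr 1
  linear_combination (-x ^ 5 - x) * hx4

theorem AlgHom.map_plusPart (f : B →ₐ[K] B) : f (plusPart K x) = plusPart K (f x) := by
  simp [plusPart]

theorem AlgHom.map_minusPart (f : B →ₐ[K] B) : f (minusPart K x) = minusPart K (f x) := by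
  simp [minusPart]

theorem tmul_plusPart_add_tmul_minusPart (x : B) :
    x ⊗ₜ[K] plusPart K x + (x ^ 3) ⊗ₜ[K] minusPart K x =
      (2 : K)⁻¹ • (x ⊗ₜ[K] x + x ⊗ₜ[K] (x ^ 3) + (x ^ 3) ⊗ₜ[K] x - (x ^ 3) ⊗ₜ[K] (x ^ 3)) := by
  simp only [plusPart, minusPart, tmul_smul, tmul_add, tmul_sub]
  module

end PlusMinus

section Coproduct

variable {K : Type*} [Field K] {B : Type*} [CommRing B] [Algebra K B]
  {ρ : GG →* (B →ₐ[K] B)} {θ : GG → GG → K} {x y : B}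

theorem invariant_of_g2_g3 {b : B} (hb2 : ρ g2 b = b) (hb3 : ρ g3 b = b) : ∀ g, ρ g b = b := by
  intro g
  rcases GG_cases g with rfl | rfl | rfl | rfl
  · rw [show g1 = 1 from rfl, map_one, AlgHom.one_apply]
  · exact hb2
  · exact hb3
  · rw [show g4 = g2 * g3 by decide, map_mul, AlgHom.mul_apply, hb3, hb2]

theorem eigen_of_g2_g3 (hθr : ∀ g h h' : GG, θ g (h * h') = θ g h * θ g h')
    {h : GG} (hθ1 : θ h 1 = 1) {b : B} (hb2 : ρ g2 b = θ h g2 • b)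
    (hb3 : ρ g3 b = θ h g3 • b) : ∀ g, ρ g b = θ h g • b := by
  intro g
  rcases GG_cases g with rfl | rfl | rfl | rfl
  · rw [show g1 = 1 from rfl, map_one, AlgHom.one_apply, hθ1, one_smul]
  · exact hb2
  · exact hb3
  · rw [show g4 = g2 * g3 by decide, map_mul, AlgHom.mul_apply, hb3, map_smul, hb2, smul_smul,
      hθr, mul_comm]

theorem rho_plusPart (hρ2x : ρ g2 x = x ^ 3) (hρ3x : ρ g3 x = x) (hx4 : x ^ 4 = 1) :
    ∀ g, ρ g (plusPart K x) = plusPart K x :=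
  invariant_of_g2_g3 (by rw [AlgHom.map_plusPart, hρ2x, plusPart_pow_three hx4])
    (by rw [AlgHom.map_plusPart, hρ3x])

theorem rho_minusPart (hθr : ∀ g h h' : GG, θ g (h * h') = θ g h * θ g h')
    (hθ32 : θ g3 g2 = -1) (hθ33 : θ g3 g3 = 1)
    (hρ2x : ρ g2 x = x ^ 3) (hρ3x : ρ g3 x = x) (hx4 : x ^ 4 = 1) :
    ∀ g, ρ g (minusPart K x) = θ g3 g • minusPart K x :=
  eigen_of_g2_g3 hθr (by rw [show (1 : GG) = g3 * g3 by decide, hθr, hθ33, one_mul])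
    (by rw [AlgHom.map_minusPart, hρ2x, minusPart_pow_three hx4, hθ32, neg_one_smul])
    (by rw [AlgHom.map_minusPart, hρ3x, hθ33, one_smul])

theorem rho_sq (hρ2x : ρ g2 x = x ^ 3) (hρ3x : ρ g3 x = x) (hx4 : x ^ 4 = 1) :
    ∀ g, ρ g (x ^ 2) = x ^ 2 :=
  invariant_of_g2_g3 (by rw [map_pow, hρ2x]; linear_combination x ^ 2 * hx4)
    (by rw [map_pow, hρ3x])

theorem twMul_tmul_add_tmul_left (hθl : ∀ g g' h : GG, θ (g * g') h = θ g h * θ g' h)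
    (horth : ∀ k : GG, ∑ g, θ k g = if k = 1 then 4 else 0) (h4 : (4 : K) ≠ 0)
    (hθ1 : ∀ g, θ 1 g = 1) {p q : B} (hp : ∀ g, ρ g p = p) (hq : ∀ g, ρ g q = θ g3 g • q)
    (a a' : B) (w : B ⊗[K] B) :
    twMul ρ θ (a ⊗ₜ p + a' ⊗ₜ q) w =
      (a ⊗ₜ p) * w + (a' ⊗ₜ q) * Algebra.TensorProduct.map (ρ g3) (AlgHom.id K B) w := by
  rw [twMul_add_left, twMul_tmul_left_of_invariant hθl horth h4 hθ1 hp,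
    twMul_tmul_left_of_eigen hθl horth h4 hq, show g3⁻¹ = g3 by decide]

theorem coproduct_on_basis (h2 : (2 : K) ≠ 0)
    (hθr : ∀ g h h' : GG, θ g (h * h') = θ g h * θ g h')
    (hθl : ∀ g g' h : GG, θ (g * g') h = θ g h * θ g' h)
    (hθ23 : θ g2 g3 = -1) (hθ32 : θ g3 g2 = -1) (hθ33 : θ g3 g3 = 1)
    (hρ2x : ρ g2 x = x ^ 3) (hρ3x : ρ g3 x = x) (hρ3y : ρ g3 y = x ^ 2 * y) (hx4 : x ^ 4 = 1)
    {Δ : B →ₗ[K] B ⊗[K] B} (hΔm : ∀ a b : B, Δ (a * b) = twMul ρ θ (Δ a) (Δ b))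
    (hΔx : Δ x = x ⊗ₜ plusPart K x + (x ^ 3) ⊗ₜ minusPart K x) (hΔy : Δ y = y ⊗ₜ y) :
    Δ (x ^ 2) = (x ^ 2) ⊗ₜ (x ^ 2) ∧
    Δ (x ^ 3) = (x ^ 3) ⊗ₜ plusPart K x + (-x) ⊗ₜ minusPart K x ∧
    Δ (x * y) = (x * y) ⊗ₜ (x * y) ∧
    Δ (x ^ 2 * y) = (x ^ 2 * y) ⊗ₜ (x ^ 2 * y) ∧
    Δ (x ^ 3 * y) = (x ^ 3 * y) ⊗ₜ (x ^ 3 * y) := by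
  have h4 : (4 : K) ≠ 0 := by
    rw [show (4 : K) = 2 * 2 by norm_num]; exact mul_ne_zero h2 h2
  have horth := sum_theta hθr hθl hθ23 hθ32 hθ33
  have hθ1 := theta_one_left hθr hθl hθ32 hθ33
  have twΔx := twMul_tmul_add_tmul_left hθl horth h4 hθ1 (rho_plusPart hρ2x hρ3x hx4)
    (rho_minusPart hθr hθ32 hθ33 hρ2x hρ3x hx4) x (x ^ 3)
  have twSq := twMul_tmul_left_of_invariant hθl horth h4 hθ1 (rho_sq hρ2x hρ3x hx4) (x ^ 2)
  have hΔ2 : Δ (x ^ 2) = (x ^ 2) ⊗ₜ (x ^ 2) := by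
    conv_lhs => rw [pow_two, hΔm, hΔx, twΔx]
    rw [map_add, Algebra.TensorProduct.map_tmul, Algebra.TensorProduct.map_tmul, hρ3x, map_pow,
      hρ3x, AlgHom.id_apply, AlgHom.id_apply, mul_add, mul_add,
      Algebra.TensorProduct.tmul_mul_tmul, Algebra.TensorProduct.tmul_mul_tmul,
      Algebra.TensorProduct.tmul_mul_tmul, Algebra.TensorProduct.tmul_mul_tmul,
      plusPart_mul_minusPart hx4, mul_comm (minusPart K x), plusPart_mul_minusPart hx4,
      tmul_zero, tmul_zero, add_zero, zero_add,
      show x ^ 3 * x ^ 3 = x ^ 2 by linear_combination x ^ 2 * hx4, ← pow_two, ← tmul_add,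
      ← pow_two, ← pow_two, plusPart_sq_add_minusPart_sq h2 hx4]
  have hΔ3 : Δ (x ^ 3) = (x ^ 3) ⊗ₜ plusPart K x + (-x) ⊗ₜ minusPart K x := by
    conv_lhs => rw [pow_succ, hΔm, hΔ2, twSq, hΔx]
    rw [mul_add, Algebra.TensorProduct.tmul_mul_tmul, Algebra.TensorProduct.tmul_mul_tmul,
      sq_mul_plusPart hx4, sq_mul_minusPart hx4, tmul_neg, ← neg_tmul, ← pow_succ,
      show x ^ 2 * x ^ 3 = x by linear_combination x * hx4]
  refine ⟨hΔ2, hΔ3, ?_, ?_, ?_⟩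
  · rw [hΔm, hΔx, hΔy, twΔx, Algebra.TensorProduct.map_tmul, hρ3y, AlgHom.id_apply,
      Algebra.TensorProduct.tmul_mul_tmul, Algebra.TensorProduct.tmul_mul_tmul,
      show x ^ 3 * (x ^ 2 * y) = x * y by linear_combination x * y * hx4, ← tmul_add, ← add_mul,
      plusPart_add_minusPart h2]
  · rw [hΔm, hΔ2, hΔy, twSq, Algebra.TensorProduct.tmul_mul_tmul]
  · rw [hΔm, hΔ3, hΔy, twMul_tmul_add_tmul_left hθl horth h4 hθ1 (rho_plusPart hρ2x hρ3x hx4)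
      (rho_minusPart hθr hθ32 hθ33 hρ2x hρ3x hx4), Algebra.TensorProduct.map_tmul, hρ3y,
      AlgHom.id_apply, Algebra.TensorProduct.tmul_mul_tmul, Algebra.TensorProduct.tmul_mul_tmul,
      show -x * (x ^ 2 * y) = -(x ^ 3 * y) by ring, neg_tmul, ← sub_eq_add_neg, ← tmul_sub,
      ← sub_mul, plusPart_sub_minusPart h2]

end Coproduct

section Antipode

variable {K : Type*} [Field K] {B : Type*} [CommRing B] [Algebra K B]

theorem fixed_of_fixed_add_smul_of_fixed_sub_smul (h2 : (2 : K) ≠ 0) {S : B →ₗ[K] B} {p m : B}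
    {u : K} (hu : u ≠ 0) (hadd : S (p + u • m) = p + u • m) (hsub : S (p - u • m) = p - u • m) :
    S p = p ∧ S m = m := by
  rw [map_add, map_smul] at hadd
  rw [map_sub, map_smul] at hsub
  have hp : S p = p :=
    smul_right_injective B h2 (by linear_combination (norm := module) hadd + hsub)
  refine ⟨hp, smul_right_injective B hu ?_⟩
  linear_combination (norm := module) hadd - hp

theorem fixed_of_fixed_plusPart_minusPart (h2 : (2 : K) ≠ 0) {S : B →ₗ[K] B} {x : B}
    (hP : S (plusPart K x) = plusPart K x) (hM : S (minusPart K x) = minusPart K x) :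
    S x = x ∧ S (x ^ 3) = x ^ 3 := by
  constructor
  · rw [← plusPart_add_minusPart (K := K) (x := x) h2, map_add, hP, hM]
  · rw [← plusPart_sub_minusPart (K := K) (x := x) h2, map_sub, hP, hM]

variable {ζ : K} {x y : B}

theorem antipode_y_mul_y (h2 : (2 : K) ≠ 0) (hζ : ζ ≠ 0) (hx4 : x ^ 4 = 1)
    (hy2 : y ^ 2 = (2 : K)⁻¹ • (1 + ζ • x + x ^ 2 - ζ • x ^ 3)) :
    (2 : K)⁻¹ • (y + ζ⁻¹ • (x ^ 3 * y) + x ^ 2 * y - ζ⁻¹ • (x * y)) * y = 1 := by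
  have hc : algebraMap K B 2⁻¹ * 2 = 1 := by
    rw [← map_ofNat (algebraMap K B) 2, ← map_mul, inv_mul_cancel₀ h2, map_one]
  have hz : algebraMap K B ζ⁻¹ * algebraMap K B ζ = 1 := by
    rw [← map_mul, inv_mul_cancel₀ hζ, map_one]
  simp only [Algebra.smul_def] at hy2 ⊢
  set c := algebraMap K B 2⁻¹
  set z := algebraMap K B ζ
  set z' := algebraMap K B ζ⁻¹
  -- The left factor is `s y` and `y² = t` with `s, t = (1 + x²)/2 ∓ ζ^{∓1} (x - x³)/2`; modulo
  -- `x⁴ = 1` the cross terms `(1 + x²)(x - x³)` vanish and `st = ((1 + x²)² - (x - x³)²)/4 = 1`.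
  linear_combination c * (1 + x ^ 2 + z' * (x ^ 3 - x)) * hy2 +
    c ^ 2 * (3 - x ^ 2 - (z - z') * x) * hx4 - c ^ 2 * (x - x ^ 3) ^ 2 * hz + (2 * c + 1) * hc

theorem antipode_x_pow_mul_y_mul (h2 : (2 : K) ≠ 0) (hζ : ζ ≠ 0) (hx4 : x ^ 4 = 1)
    (hy2 : y ^ 2 = (2 : K)⁻¹ • (1 + ζ • x + x ^ 2 - ζ • x ^ 3)) :
    (2 : K)⁻¹ • (-(ζ⁻¹ • y) + x ^ 3 * y + ζ⁻¹ • (x ^ 2 * y) + x * y) * (x * y) = 1 ∧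
    (2 : K)⁻¹ • (y - ζ⁻¹ • (x ^ 3 * y) + x ^ 2 * y + ζ⁻¹ • (x * y)) * (x ^ 2 * y) = 1 ∧
    (2 : K)⁻¹ • (ζ⁻¹ • y + x ^ 3 * y - ζ⁻¹ • (x ^ 2 * y) + x * y) * (x ^ 3 * y) = 1 := by
  have h0 := antipode_y_mul_y h2 hζ hx4 hy2
  simp only [Algebra.smul_def] at h0 ⊢
  set c := algebraMap K B 2⁻¹
  set z' := algebraMap K B ζ⁻¹
  refine ⟨?_, ?_, ?_⟩
  -- Modulo `x⁴ = 1`, the left factor for `xᵏy` is `x⁻ᵏ` times the one in `antipode_y_mul_y`.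
  · linear_combination x ^ 4 * h0 + (1 + c * y * (z' - z' * x ^ 2 - x) * x * y) * hx4
  · linear_combination x ^ 4 * h0 + (1 - c * y * (1 + z' * x) * x ^ 2 * y) * hx4
  · linear_combination x ^ 4 * h0 + (1 - c * z' * y * x ^ 3 * y) * hx4

end Antipode

theorem Submodule.eq_top_of_one_mem_of_mul_mem {R A : Type*} [CommSemiring R] [Semiring A]
    [Algebra R A] {s : Set A} (hs : Algebra.adjoin R s = ⊤) {M : Submodule R A} (h1 : 1 ∈ M)
    (hmul : ∀ m ∈ M, ∀ a ∈ s, m * a ∈ M) : M = ⊤ := by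
  have key : ∀ b ∈ Algebra.adjoin R s, ∀ m ∈ M, m * b ∈ M := by
    intro b hb
    induction hb using Algebra.adjoin_induction with
    | mem a ha => exact fun m hm => hmul m hm a ha
    | algebraMap r =>
      exact fun m hm => by rw [← Algebra.commutes, ← Algebra.smul_def]; exact M.smul_mem r hm
    | add a b _ _ ha hb => exact fun m hm => by rw [mul_add]; exact M.add_mem (ha m hm) (hb m hm)
    | mul a b _ _ ha hb => exact fun m hm => by rw [← mul_assoc]; exact hb _ (ha m hm)
  refine eq_top_iff'.mpr fun b => ?_
  simpa using key b (hs ▸ Algebra.mem_top) 1 h1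

section Spanning

variable {K : Type*} [Field K] {B : Type*} [CommRing B] [Algebra K B] {ζ : K} {x y : B}

theorem span_x_pow_mul_y_pow_eq_top (hxy : Algebra.adjoin K {x, y} = ⊤) (hx4 : x ^ 4 = 1)
    (hy2 : y ^ 2 = (2 : K)⁻¹ • (1 + ζ • x + x ^ 2 - ζ • x ^ 3)) :
    Submodule.span K {1, x, x ^ 2, x ^ 3, y, x * y, x ^ 2 * y, x ^ 3 * y} = ⊤ := by
  set M := Submodule.span K ({1, x, x ^ 2, x ^ 3, y, x * y, x ^ 2 * y, x ^ 3 * y} : Set B)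
  have hpow : ∀ n, x ^ n ∈ M ∧ x ^ n * y ∈ M := by
    intro n
    rw [pow_eq_pow_mod n hx4]
    have hn : n % 4 < 4 := Nat.mod_lt n (by norm_num)
    interval_cases n % 4 <;>
      exact ⟨Submodule.subset_span (by simp), Submodule.subset_span (by simp)⟩
  have hbasis : ∀ b ∈ ({1, x, x ^ 2, x ^ 3, y, x * y, x ^ 2 * y, x ^ 3 * y} : Set B),
      ∃ k : ℕ, b = x ^ k ∨ b = x ^ k * y := by
    rintro b (rfl | rfl | rfl | rfl | rfl | rfl | rfl | rfl)
    exacts [⟨0, .inl (pow_zero _).symm⟩, ⟨1, .inl (pow_one _).symm⟩, ⟨2, .inl rfl⟩,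
      ⟨3, .inl rfl⟩, ⟨0, .inr (by rw [pow_zero, one_mul])⟩, ⟨1, .inr (by rw [pow_one])⟩,
      ⟨2, .inr rfl⟩, ⟨3, .inr rfl⟩]
  refine Submodule.eq_top_of_one_mem_of_mul_mem hxy (by simpa using (hpow 0).1) ?_
  suffices ∀ a ∈ ({x, y} : Set B), M ≤ M.comap (LinearMap.mulRight K a) from
    fun m hm a ha => this a ha hm
  simp only [Set.mem_insert_iff, Set.mem_singleton_iff, forall_eq_or_imp, forall_eq]
  constructor <;> refine Submodule.span_le.mpr fun b hb => ?_ <;>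
    obtain ⟨k, rfl | rfl⟩ := hbasis b hb <;>
    rw [SetLike.mem_coe, Submodule.mem_comap, LinearMap.mulRight_apply]
  · exact pow_succ x k ▸ (hpow (k + 1)).1
  · exact (show x ^ k * y * x = x ^ (k + 1) * y by ring) ▸ (hpow (k + 1)).2
  · exact (hpow k).2
  · rw [mul_assoc, ← pow_two, hy2]
    simp only [mul_smul_comm, mul_add, mul_sub, mul_one, ← pow_succ, ← pow_add]
    exact M.smul_mem _ (M.sub_mem (M.add_mem (M.add_mem (hpow k).1 (M.smul_mem _ (hpow _).1))
      (hpow _).1) (M.smul_mem _ (hpow _).1))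

end Spanning

section FirstAlg

variable (K : Type*) [Field K] (ζ : K)

theorem xF_pow_four : xF K ζ ^ 4 = 1 := by
  have h : Ideal.Quotient.mk (firstRelIdeal K ζ) (X 0 ^ 4 - 1) = 0 :=
    Ideal.Quotient.eq_zero_iff_mem.mpr (Ideal.subset_span (by simp))
  rwa [map_sub, map_pow, map_one, sub_eq_zero] at h

theorem yF_sq :
    yF K ζ ^ 2 = (2 : K)⁻¹ • (1 + ζ • xF K ζ + xF K ζ ^ 2 - ζ • xF K ζ ^ 3) := by
  have h : Ideal.Quotient.mk (firstRelIdeal K ζ)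
      (X 1 ^ 2 - C (2 : K)⁻¹ * (1 + C ζ * X 0 + X 0 ^ 2 - C ζ * X 0 ^ 3)) = 0 :=
    Ideal.Quotient.eq_zero_iff_mem.mpr (Ideal.subset_span (by simp))
  have hsmul (r : K) (a : FirstAlg K ζ) : r • a = Ideal.Quotient.mk _ (C r) * a := by
    rw [Algebra.smul_def (A := FirstAlg K ζ)]; rfl
  rw [map_sub, sub_eq_zero] at h
  simpa [hsmul, xF, yF] using h

theorem adjoin_xF_yF : Algebra.adjoin K {xF K ζ, yF K ζ} = ⊤ := by
  have h : {xF K ζ, yF K ζ} = Ideal.Quotient.mkₐ K (firstRelIdeal K ζ) '' Set.range X := by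
    simp [Set.image, Set.range, Fin.exists_fin_two, xF, yF, Set.ext_iff, eq_comm]
  rw [h, Algebra.adjoin_image, MvPolynomial.adjoin_range_X, Algebra.map_top,
    AlgHom.range_eq_top]
  exact Ideal.Quotient.mkₐ_surjective K _

end FirstAlg

theorem w2F_eq (K : Type*) [Field K] (ξ ζ : K) :
    w2F K ξ ζ = plusPart K (xF K ζ) + (ξ ^ 2 * ζ ^ 2) • minusPart K (xF K ζ) := by
  simp only [w2F, plusPart, minusPart, smul_smul]
  module

theorem w3F_eq (K : Type*) [Field K] (ξ ζ : K) :
    w3F K ξ ζ = plusPart K (xF K ζ) - (ξ ^ 2 * ζ ^ 2) • minusPart K (xF K ζ) := by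
  simp only [w3F, plusPart, minusPart, smul_smul]
  module

section AntipodeIdentity

variable {K : Type*} [Field K] {A : Type*} [CommRing A] [Algebra K A]

def AntipodeIdentity (Δ : A →ₗ[K] A ⊗[K] A) (ε : A →ₐ[K] K) (S : A →ₗ[K] A) (a : A) : Prop :=
  LinearMap.mul' K A (map S LinearMap.id (Δ a)) = ε a • (1 : A) ∧
    LinearMap.mul' K A (map LinearMap.id S (Δ a)) = ε a • (1 : A)

variable {Δ : A →ₗ[K] A ⊗[K] A} {ε : A →ₐ[K] K} {S : A →ₗ[K] A}

theorem antipodeIdentity_of_span {s : Set A} (hs : Submodule.span K s = ⊤)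
    (h : ∀ a ∈ s, AntipodeIdentity Δ ε S a) (a : A) : AntipodeIdentity Δ ε S a := by
  let e : A →ₗ[K] A := Algebra.linearMap K A ∘ₗ ε.toLinearMap
  have he (b : A) : e b = ε b • (1 : A) := by simp [e, Algebra.algebraMap_eq_smul_one]
  have hl : LinearMap.mul' K A ∘ₗ map S LinearMap.id ∘ₗ Δ = e :=
    LinearMap.ext_on hs fun b hb => by simpa [he] using (h b hb).1
  have hr : LinearMap.mul' K A ∘ₗ map LinearMap.id S ∘ₗ Δ = e :=
    LinearMap.ext_on hs fun b hb => by simpa [he] using (h b hb).2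
  exact ⟨by simpa [he] using LinearMap.congr_fun hl a, by simpa [he] using LinearMap.congr_fun hr a⟩

theorem antipodeIdentity_of_grouplike {g : A} (hΔ : Δ g = g ⊗ₜ g) (hε : ε g = 1)
    (hS : S g * g = 1) : AntipodeIdentity Δ ε S g := by
  simp [AntipodeIdentity, hΔ, hε, hS, mul_comm g]

theorem antipodeIdentity_of_tmul_add_tmul {a u v p q : A} (hΔ : Δ a = u ⊗ₜ p + v ⊗ₜ q)
    (hu : S u = u) (hv : S v = v) (hp : S p = p) (hq : S q = q) (hε : ε a = 1)
    (h : u * p + v * q = 1) : AntipodeIdentity Δ ε S a := by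
  simp [AntipodeIdentity, hΔ, hu, hv, hp, hq, hε, h]

end AntipodeIdentity

theorem stmt_10_general {K : Type*} [Field K] (ξ : K) (hξ : IsPrimitiveRoot ξ 8)
    (ζ : K) (hζ : ζ ^ 4 = 1)
    (ρ : GG →* (FirstAlg K ζ →ₐ[K] FirstAlg K ζ))
    (hρ2x : ρ g2 (xF K ζ) = xF K ζ ^ 3)
    (hρ3x : ρ g3 (xF K ζ) = xF K ζ) (hρ3y : ρ g3 (yF K ζ) = xF K ζ ^ 2 * yF K ζ)
    (θ : GG → GG → K)
    (hθr : ∀ g h h' : GG, θ g (h * h') = θ g h * θ g h')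
    (hθl : ∀ g g' h : GG, θ (g * g') h = θ g h * θ g' h)
    (hθ23 : θ g2 g3 = -1)
    (hθ32 : θ g3 g2 = -1) (hθ33 : θ g3 g3 = 1)
    -- the coproduct `Δ : A → A ⊗̂ A`
    (Δ : FirstAlg K ζ →ₗ[K] FirstAlg K ζ ⊗[K] FirstAlg K ζ)
    (hΔ1 : Δ 1 = (1 : FirstAlg K ζ) ⊗ₜ[K] (1 : FirstAlg K ζ))
    (hΔm : ∀ a b : FirstAlg K ζ, Δ (a * b) = twMul ρ θ (Δ a) (Δ b))
    (hΔx : Δ (xF K ζ) = (2 : K)⁻¹ •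
      ((xF K ζ) ⊗ₜ[K] (xF K ζ) + (xF K ζ) ⊗ₜ[K] (xF K ζ ^ 3) +
        (xF K ζ ^ 3) ⊗ₜ[K] (xF K ζ) - (xF K ζ ^ 3) ⊗ₜ[K] (xF K ζ ^ 3)))
    (hΔy : Δ (yF K ζ) = (yF K ζ) ⊗ₜ[K] (yF K ζ))
    -- the counit `ε : A → K` with `ε(x) = ε(y) = 1`
    (ε : FirstAlg K ζ →ₐ[K] K)
    (hεx : ε (xF K ζ) = 1) (hεy : ε (yF K ζ) = 1)
    -- the antipode `S`, given on the basis of group-like elements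
    (S : FirstAlg K ζ →ₗ[K] FirstAlg K ζ)
    (hSw1 : S (w1F K ζ) = w1F K ζ) (hSw2 : S (w2F K ξ ζ) = w2F K ξ ζ)
    (hSw3 : S (w3F K ξ ζ) = w3F K ξ ζ) (hSw4 : S (w4F K ζ) = w4F K ζ)
    (hSe1 : S (e1F K ζ) = (2 : K)⁻¹ •
      (e1F K ζ + ζ⁻¹ • e2F K ζ + e3F K ζ - ζ⁻¹ • e4F K ζ))
    (hSe2 : S (e2F K ζ) = (2 : K)⁻¹ •
      (ζ⁻¹ • e1F K ζ + e2F K ζ - ζ⁻¹ • e3F K ζ + e4F K ζ))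
    (hSe3 : S (e3F K ζ) = (2 : K)⁻¹ •
      (e1F K ζ - ζ⁻¹ • e2F K ζ + e3F K ζ + ζ⁻¹ • e4F K ζ))
    (hSe4 : S (e4F K ζ) = (2 : K)⁻¹ •
      (-(ζ⁻¹ • e1F K ζ) + e2F K ζ + ζ⁻¹ • e3F K ζ + e4F K ζ)) :
    -- `S` is an antipode: `∑ S(a₁)a₂ = ε(a)1 = ∑ a₁S(a₂)`
    ∀ a : FirstAlg K ζ,
      (LinearMap.mul' K (FirstAlg K ζ))
          ((TensorProduct.map S LinearMap.id) (Δ a)) = ε a • (1 : FirstAlg K ζ) ∧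
      (LinearMap.mul' K (FirstAlg K ζ))
          ((TensorProduct.map LinearMap.id S) (Δ a)) = ε a • (1 : FirstAlg K ζ) := by
  have h2 : (2 : K) ≠ 0 := two_ne_zero_of_isPrimitiveRoot hξ (by norm_num)
  have hζ0 : ζ ≠ 0 := by rintro rfl; norm_num at hζ
  simp only [w1F, w4F, e1F, e2F, e3F, e4F] at hSw1 hSw4 hSe1 hSe2 hSe3 hSe4
  have hx4 := xF_pow_four K ζ
  have hy2 := yF_sq K ζ
  have hΔx' := (hΔx ▸ tmul_plusPart_add_tmul_minusPart (K := K) (xF K ζ)).symm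
  obtain ⟨hΔx2, hΔx3, hΔxy, hΔx2y, hΔx3y⟩ := coproduct_on_basis h2 hθr hθl hθ23 hθ32 hθ33
    hρ2x hρ3x hρ3y hx4 hΔm hΔx' hΔy
  obtain ⟨hSP, hSM⟩ := fixed_of_fixed_add_smul_of_fixed_sub_smul h2
    (mul_ne_zero (pow_ne_zero 2 (hξ.ne_zero (by norm_num))) (pow_ne_zero 2 hζ0))
    (w2F_eq K ξ ζ ▸ hSw2) (w3F_eq K ξ ζ ▸ hSw3)
  obtain ⟨hSx, hSx3⟩ := fixed_of_fixed_plusPart_minusPart h2 hSP hSM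
  obtain ⟨hη4, hη3, hη2⟩ := antipode_x_pow_mul_y_mul h2 hζ0 hx4 hy2
  refine antipodeIdentity_of_span (span_x_pow_mul_y_pow_eq_top (adjoin_xF_yF K ζ) hx4 hy2) ?_
  rintro _ (rfl | rfl | rfl | rfl | rfl | rfl | rfl | rfl)
  · exact antipodeIdentity_of_grouplike hΔ1 (map_one ε) (by rw [mul_one, hSw1])
  · exact antipodeIdentity_of_tmul_add_tmul hΔx' hSx hSx3 hSP hSM hεx
      (mul_plusPart_add_mul_minusPart h2 hx4)
  · exact antipodeIdentity_of_grouplike hΔx2 (by simp [hεx])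
      (by rw [hSw4]; linear_combination hx4)
  · exact antipodeIdentity_of_tmul_add_tmul hΔx3 hSx3 (by rw [map_neg, hSx]) hSP hSM
      (by simp [hεx]) (pow_three_mul_plusPart_sub_mul_minusPart h2 hx4)
  · exact antipodeIdentity_of_grouplike hΔy hεy (hSe1 ▸ antipode_y_mul_y h2 hζ0 hx4 hy2)
  · exact antipodeIdentity_of_grouplike hΔxy (by simp [hεx, hεy]) (hSe4 ▸ hη4)
  · exact antipodeIdentity_of_grouplike hΔx2y (by simp [hεx, hεy]) (hSe3 ▸ hη3)
  · exact antipodeIdentity_of_grouplike hΔx3y (by simp [hεx, hεy]) (hSe2 ▸ hη2)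

theorem stmt_10 {K : Type*} [Field K] (ξ : K) (hξ : IsPrimitiveRoot ξ 8)
    (ζ : K) (hζ : ζ ^ 4 = 1)
    (ρ : GG →* (FirstAlg K ζ →ₐ[K] FirstAlg K ζ))
    (hρ2x : ρ g2 (xF K ζ) = xF K ζ ^ 3) (hρ2y : ρ g2 (yF K ζ) = xF K ζ ^ 3 * yF K ζ)
    (hρ3x : ρ g3 (xF K ζ) = xF K ζ) (hρ3y : ρ g3 (yF K ζ) = xF K ζ ^ 2 * yF K ζ)
    (θ : GG → GG → K)
    (hθr : ∀ g h h' : GG, θ g (h * h') = θ g h * θ g h')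
    (hθl : ∀ g g' h : GG, θ (g * g') h = θ g h * θ g' h)
    (hθ22 : θ g2 g2 = ζ ^ 2) (hθ23 : θ g2 g3 = -1)
    (hθ32 : θ g3 g2 = -1) (hθ33 : θ g3 g3 = 1)
    -- the coproduct `Δ : A → A ⊗̂ A`
    (Δ : FirstAlg K ζ →ₗ[K] FirstAlg K ζ ⊗[K] FirstAlg K ζ)
    (hΔ1 : Δ 1 = (1 : FirstAlg K ζ) ⊗ₜ[K] (1 : FirstAlg K ζ))
    (hΔm : ∀ a b : FirstAlg K ζ, Δ (a * b) = twMul ρ θ (Δ a) (Δ b))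
    (hΔx : Δ (xF K ζ) = (2 : K)⁻¹ •
      ((xF K ζ) ⊗ₜ[K] (xF K ζ) + (xF K ζ) ⊗ₜ[K] (xF K ζ ^ 3) +
        (xF K ζ ^ 3) ⊗ₜ[K] (xF K ζ) - (xF K ζ ^ 3) ⊗ₜ[K] (xF K ζ ^ 3)))
    (hΔy : Δ (yF K ζ) = (yF K ζ) ⊗ₜ[K] (yF K ζ))
    -- the counit `ε : A → K` with `ε(x) = ε(y) = 1`
    (ε : FirstAlg K ζ →ₐ[K] K)
    (hεx : ε (xF K ζ) = 1) (hεy : ε (yF K ζ) = 1)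
    -- the antipode `S`, given on the basis of group-like elements
    (S : FirstAlg K ζ →ₗ[K] FirstAlg K ζ)
    (hSw1 : S (w1F K ζ) = w1F K ζ) (hSw2 : S (w2F K ξ ζ) = w2F K ξ ζ)
    (hSw3 : S (w3F K ξ ζ) = w3F K ξ ζ) (hSw4 : S (w4F K ζ) = w4F K ζ)
    (hSe1 : S (e1F K ζ) = (2 : K)⁻¹ •
      (e1F K ζ + ζ⁻¹ • e2F K ζ + e3F K ζ - ζ⁻¹ • e4F K ζ))
    (hSe2 : S (e2F K ζ) = (2 : K)⁻¹ •
      (ζ⁻¹ • e1F K ζ + e2F K ζ - ζ⁻¹ • e3F K ζ + e4F K ζ))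
    (hSe3 : S (e3F K ζ) = (2 : K)⁻¹ •
      (e1F K ζ - ζ⁻¹ • e2F K ζ + e3F K ζ + ζ⁻¹ • e4F K ζ))
    (hSe4 : S (e4F K ζ) = (2 : K)⁻¹ •
      (-(ζ⁻¹ • e1F K ζ) + e2F K ζ + ζ⁻¹ • e3F K ζ + e4F K ζ)) :
    -- `S` is an antipode: `∑ S(a₁)a₂ = ε(a)1 = ∑ a₁S(a₂)`
    ∀ a : FirstAlg K ζ,
      (LinearMap.mul' K (FirstAlg K ζ))
          ((TensorProduct.map S LinearMap.id) (Δ a)) = ε a • (1 : FirstAlg K ζ) ∧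
      (LinearMap.mul' K (FirstAlg K ζ))
          ((TensorProduct.map LinearMap.id S) (Δ a)) = ε a • (1 : FirstAlg K ζ) :=
  stmt_10_general ξ hξ ζ hζ ρ hρ2x hρ3x hρ3y θ hθr hθl hθ23 hθ32 hθ33 Δ hΔ1 hΔm hΔx hΔy ε hεx hεy S
    hSw1 hSw2 hSw3 hSw4 hSe1 hSe2 hSe3 hSe4
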